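/- Let A be an integer array of size (mp+1)×(np) with the p×p property, and let 1 ≤ k < p. Let a_1,...,a_k be the first k entries of the top row, b_{k+1},...,b_p the last p−k entries of the top row, and c_1,...,c_k, d_{k+1},...,d_p the corresponding entries of the bottom row. Then ∑_{i=1}^{k} a_i + ∑_{j=k+1}^{p} b_j = ∑_{i=1}^{k} c_i + ∑_{j=k+1}^{p} d_j. -/

import Mathlib

/-! Write `W_r(j)` for the sum of the `p` consecutive entries of row `r` starting at column `j`.
Comparing the `p × p` squares with top rows `i` and `i + 1` gives `W_{i+p}(j) = W_i(j)`, so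
row `0` and row `mp` have the same window sums. The first `k` and the last `p - k` entries of a
row of length `np` are what remains of the whole row, a sum of `n` windows, after removing the
middle `(n - 1)p` entries starting at column `k`, a sum of `n - 1` windows. -/

open Finset

variable {M : Type*} [AddCancelCommMonoid M]

def windowSum (p : ℕ) (f : ℕ → M) (j : ℕ) : M :=
  ∑ b ∈ range p, f (j + b)

lemma sum_range_mul_eq_sum_windowSum (f : ℕ → M) (p s q : ℕ) :
    ∑ i ∈ range (q * p), f (s + i) = ∑ t ∈ range q, windowSum p f (s + t * p) := by
  induction q with
  | zero => simp
  | succ q ih =>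
    rw [Nat.succ_mul, sum_range_add, ih, sum_range_succ]
    simp only [windowSum, add_assoc]

lemma apply_add_eq_of_windowSum_eq (f : ℕ → M) (p i : ℕ)
    (h : windowSum p f i = windowSum p f (i + 1)) : f (i + p) = f i := by
  have hshift : windowSum p f i + f (i + p) = f i + windowSum p f (i + 1) := by
    simp only [windowSum]
    rw [← sum_range_succ (fun a => f (i + a)), sum_range_succ', add_comm]
    simp only [add_zero, add_assoc, add_comm 1]
  rw [h, add_comm] at hshift
  exact add_right_cancel hshift

lemma apply_mul_eq_apply_zero {α : Type*} (f : ℕ → α) (p L : ℕ)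
    (hf : ∀ i, i + p ≤ L → f (i + p) = f i) (t : ℕ) (ht : t * p ≤ L) : f (t * p) = f 0 := by
  induction t with
  | zero => simp
  | succ t ih =>
    rw [Nat.succ_mul] at ht ⊢
    rw [hf _ ht, ih (by omega)]

lemma windowSum_row_mul_eq_row_zero (A : ℕ → ℕ → M) (S : M) (p m N : ℕ)
    (hA : ∀ i j, i + p ≤ m * p + 1 → j + p ≤ N → ∑ a ∈ range p, windowSum p (A (i + a)) j = S)
    (j : ℕ) (hj : j + p ≤ N) : windowSum p (A (m * p)) j = windowSum p (A 0) j := by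
  refine apply_mul_eq_apply_zero (fun i => windowSum p (A i) j) p (m * p) (fun i hi => ?_) m le_rfl
  exact apply_add_eq_of_windowSum_eq (fun i => windowSum p (A i) j) p i
    ((hA i j (by omega) hj).trans (hA (i + 1) j (by omega) hj).symm)

lemma sum_ends_add_sum_windowSum (f : ℕ → M) (n k p : ℕ) (hkp : k ≤ p) :
    (∑ i ∈ range k, f i) + (∑ j ∈ range (p - k), f (n * p + k + j)) +
        ∑ t ∈ range n, windowSum p f (k + t * p) =
      ∑ t ∈ range (n + 1), windowSum p f (t * p) := by
  have hlen : (n + 1) * p = k + (n * p + (p - k)) := by rw [Nat.succ_mul]; omega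
  have hrow := sum_range_mul_eq_sum_windowSum f p 0 (n + 1)
  rw [hlen, sum_range_add, sum_range_add] at hrow
  simp only [zero_add] at hrow
  rw [← hrow, ← sum_range_mul_eq_sum_windowSum, add_comm (n * p) k]
  simp only [add_assoc]
  abel

theorem stmt_6_general (m n k p : ℕ) (hn : 0 < n)
    (hkp : k < p)
    (A : ℕ → ℕ → ℤ) (S : ℤ)
    (h : ∀ i j : ℕ, i + p ≤ m * p + 1 → j + p ≤ n * p →
      ∑ a : Fin p, ∑ b : Fin p, A (i + a) (j + b) = S) :
    (∑ i ∈ Finset.range k, A 0 i) + (∑ j ∈ Finset.range (p - k), A 0 ((n - 1) * p + k + j)) =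
      (∑ i ∈ Finset.range k, A (m * p) i) +
        (∑ j ∈ Finset.range (p - k), A (m * p) ((n - 1) * p + k + j)) := by
  have hA : ∀ i j, i + p ≤ m * p + 1 → j + p ≤ n * p →
      ∑ a ∈ range p, windowSum p (A (i + a)) j = S := by
    intro i j hi hj
    rw [← h i j hi hj]
    simp only [windowSum, ← Fin.sum_univ_eq_sum_range]
  have hwin := windowSum_row_mul_eq_row_zero A S p m (n * p) hA
  obtain ⟨n, rfl⟩ := Nat.exists_eq_add_one_of_ne_zero hn.ne'
  have hfull : ∑ t ∈ range (n + 1), windowSum p (A 0) (t * p) =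
      ∑ t ∈ range (n + 1), windowSum p (A (m * p)) (t * p) :=
    sum_congr rfl fun t ht => (hwin _ (by nlinarith [mem_range.mp ht])).symm
  have hmid : ∑ t ∈ range n, windowSum p (A 0) (k + t * p) =
      ∑ t ∈ range n, windowSum p (A (m * p)) (k + t * p) :=
    sum_congr rfl fun t ht => (hwin _ (by nlinarith [mem_range.mp ht])).symm
  rw [Nat.add_sub_cancel]
  apply add_right_cancel (b := ∑ t ∈ range n, windowSum p (A 0) (k + t * p))
  rw [sum_ends_add_sum_windowSum _ _ _ _ hkp.le, hmid, sum_ends_add_sum_windowSum _ _ _ _ hkp.le,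
    hfull]

/-- Lemma: if an (mp+1)×(np) integer array has the (contiguous) p×p property and
1 ≤ k < p, then (sum of first k entries of top row) + (sum of last p−k entries of
top row) equals the corresponding sum for the bottom row. -/
theorem stmt_6 (m n k p : ℕ) (hm : 0 < m) (hn : 0 < n) (hp : 2 ≤ p)
    (hk1 : 1 ≤ k) (hkp : k < p)
    (A : ℕ → ℕ → ℤ) (S : ℤ)
    (h : ∀ i j : ℕ, i + p ≤ m * p + 1 → j + p ≤ n * p →
      ∑ a : Fin p, ∑ b : Fin p, A (i + a) (j + b) = S) :
    (∑ i ∈ Finset.range k, A 0 i) + (∑ j ∈ Finset.range (p - k), A 0 ((n - 1) * p + k + j)) =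
      (∑ i ∈ Finset.range k, A (m * p) i) +
        (∑ j ∈ Finset.range (p - k), A (m * p) ((n - 1) * p + k + j)) :=
  stmt_6_general m n k p hn hkp A S h
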